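/- For the generalized telescoping sum with exponent 1+ξ (ξ ≥ 0): if Δ_1 ≥ ... ≥ Δ_K > 0 then Δ_1/Δ_1^{1+ξ} + ∑_{k=2}^K Δ_k·(1/Δ_k^{1+ξ} − 1/Δ_{k−1}^{1+ξ}) ≤ (1+ξ)/(ξ·Δ_K^ξ) when ξ > 0, and in particular this sum is at most C/Δ_K^ξ for C = (1+ξ)/ξ. -/

import Mathlib

/-!
With `f t = t ^ (-ξ)`, each summand `Δ_k (Δ_k^{-(1+ξ)} - Δ_{k-1}^{-(1+ξ)})` equals
`f Δ_k - f Δ_{k-1}` plus `(Δ_{k-1} - Δ_k) Δ_{k-1}^{-(1+ξ)}`, and by convexity of `f` the latter is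
at most `(f Δ_k - f Δ_{k-1}) / ξ`. So the sum telescopes to at most
`f Δ_1 + C (f Δ_K - f Δ_1) ≤ C f Δ_K` with `C = (1 + ξ) / ξ ≥ 1`.
-/

open Finset Real

theorem Finset.sum_Ico_one_sub_pred {M : Type*} [AddCommGroup M] (f : ℕ → M) {K : ℕ}
    (hK : 0 < K) : ∑ k ∈ Ico 1 K, (f k - f (k - 1)) = f (K - 1) - f 0 := by
  obtain ⟨n, rfl⟩ := Nat.exists_eq_add_of_lt hK
  rw [sum_Ico_eq_sum_range]
  simpa [add_comm] using sum_range_sub f n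

theorem Real.div_rpow_one_add {x : ℝ} (hx : 0 < x) (ξ : ℝ) : x / x ^ (1 + ξ) = 1 / x ^ ξ := by
  rw [rpow_add hx, rpow_one, div_mul_cancel_left₀ hx.ne', one_div]

/-- Tangent-line inequality for the convex function `t ↦ t ^ (-ξ)` at `a`, from Bernoulli's
inequality `1 + (1 + ξ) (a / b - 1) ≤ (a / b) ^ (1 + ξ)`. -/
theorem Real.mul_sub_div_rpow_one_add_le {ξ a b : ℝ} (hξ : 0 ≤ ξ) (ha : 0 < a) (hb : 0 < b) :
    ξ * (a - b) / a ^ (1 + ξ) ≤ 1 / b ^ ξ - 1 / a ^ ξ := by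
  have hB : 0 < b ^ ξ := rpow_pos_of_pos hb ξ
  have hA : 0 < a ^ ξ := rpow_pos_of_pos ha ξ
  have bernoulli := one_add_mul_self_le_rpow_one_add (s := a / b - 1) (p := 1 + ξ)
    (by linarith [div_pos ha hb]) (by linarith)
  rw [add_sub_cancel, div_rpow ha.le hb.le, rpow_add ha, rpow_add hb, rpow_one, rpow_one,
    le_div_iff₀ (by positivity)] at bernoulli
  have key : ξ * (a - b) * b ^ ξ ≤ a * (a ^ ξ - b ^ ξ) := by
    have : (1 + (1 + ξ) * (a / b - 1)) * (b * b ^ ξ) = (b + (1 + ξ) * (a - b)) * b ^ ξ := by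
      field_simp
    linarith
  rw [rpow_add ha, rpow_one, div_sub_div _ _ hB.ne' hA.ne', div_le_div_iff₀ (by positivity)
    (by positivity)]
  nlinarith [mul_le_mul_of_nonneg_right key hA.le]

theorem Real.mul_one_div_rpow_one_add_sub_le {ξ a b : ℝ} (hξ : 0 < ξ) (ha : 0 < a) (hb : 0 < b) :
    b * (1 / b ^ (1 + ξ) - 1 / a ^ (1 + ξ)) ≤ (1 + ξ) / ξ * (1 / b ^ ξ - 1 / a ^ ξ) := by
  have tangent : (a - b) / a ^ (1 + ξ) ≤ (1 / b ^ ξ - 1 / a ^ ξ) / ξ := by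
    rw [le_div_iff₀ hξ, div_mul_eq_mul_div, mul_comm]
    exact mul_sub_div_rpow_one_add_le hξ.le ha hb
  have split : b * (1 / b ^ (1 + ξ) - 1 / a ^ (1 + ξ))
      = (1 / b ^ ξ - 1 / a ^ ξ) + (a - b) / a ^ (1 + ξ) := by
    rw [mul_sub, mul_one_div, mul_one_div, div_rpow_one_add hb, ← div_rpow_one_add ha]
    ring
  have factor : (1 + ξ) / ξ * (1 / b ^ ξ - 1 / a ^ ξ)
      = (1 / b ^ ξ - 1 / a ^ ξ) + (1 / b ^ ξ - 1 / a ^ ξ) / ξ := by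
    field_simp
    ring
  rw [split, factor]
  linarith

theorem stmt_10_general (K : ℕ) (hK : 0 < K) (ξ : ℝ) (hξ : 0 < ξ) (Δ : ℕ → ℝ)
    (hpos : ∀ k < K, 0 < Δ k) :
    Δ 0 / (Δ 0) ^ (1 + ξ) +
        ∑ k ∈ Finset.Ico 1 K, Δ k * (1 / (Δ k) ^ (1 + ξ) - 1 / (Δ (k - 1)) ^ (1 + ξ))
      ≤ (1 + ξ) / (ξ * (Δ (K - 1)) ^ ξ) := by
  set C := (1 + ξ) / ξ
  set f : ℕ → ℝ := fun k => 1 / Δ k ^ ξ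
  have hC : 1 ≤ C := by rw [le_div_iff₀ hξ]; linarith
  have hf0 : 0 ≤ f 0 := by have := hpos 0 hK; positivity
  have terms : ∀ k ∈ Ico 1 K,
      Δ k * (1 / Δ k ^ (1 + ξ) - 1 / Δ (k - 1) ^ (1 + ξ)) ≤ C * (f k - f (k - 1)) := by
    intro k hk
    have hk := mem_Ico.mp hk
    exact mul_one_div_rpow_one_add_sub_le hξ (hpos _ (by omega)) (hpos k hk.2)
  calc Δ 0 / Δ 0 ^ (1 + ξ) +
        ∑ k ∈ Ico 1 K, Δ k * (1 / Δ k ^ (1 + ξ) - 1 / Δ (k - 1) ^ (1 + ξ))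
      ≤ f 0 + ∑ k ∈ Ico 1 K, C * (f k - f (k - 1)) := by
        rw [div_rpow_one_add (hpos 0 hK)]
        exact add_le_add_right (sum_le_sum terms) _
    _ = f 0 + C * (f (K - 1) - f 0) := by rw [← mul_sum, sum_Ico_one_sub_pred f hK]
    _ ≤ C * f (K - 1) := by linarith [mul_le_mul_of_nonneg_right hC hf0]
    _ = (1 + ξ) / (ξ * Δ (K - 1) ^ ξ) := by simp only [C, f]; field_simp

/-- Generalized telescoping bound with exponent `1 + ξ`, `ξ > 0`:
`Δ_1/Δ_1^{1+ξ} + ∑_{k≥2} Δ_k (1/Δ_k^{1+ξ} - 1/Δ_{k-1}^{1+ξ}) ≤ (1+ξ)/(ξ Δ_K^ξ)`. -/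
theorem stmt_10 (K : ℕ) (hK : 0 < K) (ξ : ℝ) (hξ : 0 < ξ) (Δ : ℕ → ℝ)
    (hpos : ∀ k < K, 0 < Δ k)
    (hmono : ∀ i j : ℕ, i ≤ j → j < K → Δ j ≤ Δ i) :
    Δ 0 / (Δ 0) ^ (1 + ξ) +
        ∑ k ∈ Finset.Ico 1 K, Δ k * (1 / (Δ k) ^ (1 + ξ) - 1 / (Δ (k - 1)) ^ (1 + ξ))
      ≤ (1 + ξ) / (ξ * (Δ (K - 1)) ^ ξ) :=
  stmt_10_general K hK ξ hξ Δ hpos
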